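/- Let m, h > 0 and let V : ℝ → ℝ be differentiable. Suppose real numbers q_j, q_{j+ξ}, q_{j+1−ξ}, q_{j+1} satisfy the internal equations of the nonlinear Lobatto scheme, and define p_{j+1} = ∂L_d/∂q_r(q_j, q_{j+ξ}, q_{j+1−ξ}, q_{j+1}) and p_j = −∂L_d/∂q_ℓ(q_j, q_{j+ξ}, q_{j+1−ξ}, q_{j+1}). Then p_{j+1} − p_j + (h/12)[V′(q_j) + 5(V′(q_{j+ξ}) + V′(q_{j+1−ξ})) + V′(q_{j+1})] = 0 and q_{j+1} − q_j − (h²/(24m))[V′(q_{j+1}) + √5(V′(q_{j+1−ξ}) − V′(q_{j+ξ})) − V′(q_j)] − (h/(2m))(p_{j+1} + p_j) = 0. -/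

import Mathlib

/-! The discrete Lagrangian is quadratic in the endpoint variables up to the terms
`-(h/12) V(qℓ)`, `-(h/12) V(qr)`, so both momenta are explicit affine functions of the four
positions minus `(h/12) V'` at the respective endpoint. Adding the two internal equations
expresses `qξ + q1mξ - qℓ - qr` through `V'(qξ) + V'(q1mξ)`, which gives the momentum update;
subtracting them (and using `√5 * √5 = 5`) expresses `qξ - q1mξ` through `qr - qℓ` and
`V'(q1mξ) - V'(qξ)`, which gives the position update. -/

/-- The nonlinear discrete Lagrangian with mass `m`, time step `h` and potential `V`. -/
noncomputable def LdNL (m h : ℝ) (V : ℝ → ℝ) (qℓ qξ q1mξ qr : ℝ) : ℝ :=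
  (m / (12 * h)) *
    (26 * (qℓ^2 + qr^2) - 2 * qℓ * qr + 50 * (qξ^2 - qξ * q1mξ + q1mξ^2)
      - 25 * (qℓ + qr) * (qξ + q1mξ)
      - 15 * Real.sqrt 5 * (qℓ - qr) * (qξ - q1mξ))
  - (h/12) * (V qℓ + 5 * (V qξ + V q1mξ) + V qr)

theorem hasDerivAt_quadratic_sub_mul {V : ℝ → ℝ} {v x : ℝ} (a b c k : ℝ)
    (hV : HasDerivAt V v x) :
    HasDerivAt (fun y => a * y ^ 2 + b * y + c - k * V y) (2 * a * x + b - k * v) x := by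
  have hquad :=
    (((hasDerivAt_pow 2 x).const_mul a).add ((hasDerivAt_id x).const_mul b)).add_const c
  refine (hquad.sub (hV.const_mul k)).congr_deriv ?_
  norm_num
  ring

section DiscreteLegendre

variable {m h : ℝ} {V : ℝ → ℝ} {qℓ qξ q1mξ qr : ℝ}

theorem hasDerivAt_LdNL_right (hV : DifferentiableAt ℝ V qr) :
    HasDerivAt (fun x => LdNL m h V qℓ qξ q1mξ x)
      (m / (12 * h) * (52 * qr - 2 * qℓ - 25 * (qξ + q1mξ) + 15 * √5 * (qξ - q1mξ))
        - h / 12 * deriv V qr) qr := by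
  convert hasDerivAt_quadratic_sub_mul (m / (12 * h) * 26)
    (m / (12 * h) * (-2 * qℓ - 25 * (qξ + q1mξ) + 15 * √5 * (qξ - q1mξ)))
    (m / (12 * h) * (26 * qℓ ^ 2 + 50 * (qξ ^ 2 - qξ * q1mξ + q1mξ ^ 2)
        - 25 * qℓ * (qξ + q1mξ) - 15 * √5 * qℓ * (qξ - q1mξ))
      - h / 12 * (V qℓ + 5 * (V qξ + V q1mξ))) (h / 12) hV.hasDerivAt using 1
  · funext x
    unfold LdNL
    ring
  · ring

theorem hasDerivAt_LdNL_left (hV : DifferentiableAt ℝ V qℓ) :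
    HasDerivAt (fun x => LdNL m h V x qξ q1mξ qr)
      (m / (12 * h) * (52 * qℓ - 2 * qr - 25 * (qξ + q1mξ) - 15 * √5 * (qξ - q1mξ))
        - h / 12 * deriv V qℓ) qℓ := by
  convert hasDerivAt_quadratic_sub_mul (m / (12 * h) * 26)
    (m / (12 * h) * (-2 * qr - 25 * (qξ + q1mξ) - 15 * √5 * (qξ - q1mξ)))
    (m / (12 * h) * (26 * qr ^ 2 + 50 * (qξ ^ 2 - qξ * q1mξ + q1mξ ^ 2)
        - 25 * qr * (qξ + q1mξ) + 15 * √5 * qr * (qξ - q1mξ))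
      - h / 12 * (V qr + 5 * (V qξ + V q1mξ))) (h / 12) hV.hasDerivAt using 1
  · funext x
    unfold LdNL
    ring
  · ring

end DiscreteLegendre

/-- The discrete Hamiltonian dynamics of the nonlinear Lobatto scheme: with the momenta
defined from the discrete Lagrangian, the two stated update equations hold. -/
theorem discrete_hamiltonian_dynamics (m h : ℝ) (hm : 0 < m) (hh : 0 < h)
    (V : ℝ → ℝ) (hV : Differentiable ℝ V) (qj qjpξ qjp1mξ qjp1 : ℝ)
    (hinta : qjpξ - (h^2/(30*m)) * (deriv V qjp1mξ + 2 * deriv V qjpξ)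
        = ((5 + Real.sqrt 5)/10) * qj + ((5 - Real.sqrt 5)/10) * qjp1)
    (hintb : qjp1mξ - (h^2/(30*m)) * (2 * deriv V qjp1mξ + deriv V qjpξ)
        = ((5 - Real.sqrt 5)/10) * qj + ((5 + Real.sqrt 5)/10) * qjp1) :
    let pjp1 : ℝ := deriv (fun x => LdNL m h V qj qjpξ qjp1mξ x) qjp1
    let pj : ℝ := -deriv (fun x => LdNL m h V x qjpξ qjp1mξ qjp1) qj
    pjp1 - pj + (h/12) * (deriv V qj + 5 * (deriv V qjpξ + deriv V qjp1mξ)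
        + deriv V qjp1) = 0
    ∧ qjp1 - qj - (h^2/(24*m)) * (deriv V qjp1
          + Real.sqrt 5 * (deriv V qjp1mξ - deriv V qjpξ) - deriv V qj)
        - (h/(2*m)) * (pjp1 + pj) = 0 := by
  intro pjp1 pj
  rw [show pjp1 = _ from (hasDerivAt_LdNL_right (hV qjp1)).deriv,
    show pj = _ from congrArg Neg.neg (hasDerivAt_LdNL_left (hV qj)).deriv]
  have hsqrt5 : √5 * √5 = 5 := Real.mul_self_sqrt (by norm_num)
  have hm0 : m ≠ 0 := hm.ne'
  have hh0 : h ≠ 0 := hh.ne'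
  field_simp at hinta hintb ⊢
  constructor
  · linear_combination (-1/6 : ℝ) * hinta + (-1/6 : ℝ) * hintb
  · linear_combination (-(12/5) * √5) * hinta + ((12/5) * √5) * hintb
      + (144 * m * (qjp1 - qj)) * hsqrt5
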